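/- Let Ṁ, M : ℝᵈ → ℝⁿˣⁿ, A : ℝᵈ → ℝⁿˣⁿ, B : ℝᵈ → ℝⁿˣᵐ, and K : ℝᵈ → ℝᵐˣⁿ be matrix-valued functions such that for every X ∈ ℝᵈ the matrix Ṁ(X) + (A(X)+B(X)K(X))ᵀM(X) + M(X)(A(X)+B(X)K(X)) + 2λM(X) is symmetric. Suppose Ṁ, M, A, B, K are Lipschitz continuous (with respect to the Euclidean norm on ℝᵈ and the operator 2-norm on matrices) with Lipschitz constants L_Ṁ, L_M, L_A, L_B, L_K respectively, and that the operator 2-norms of M, A, B, K are uniformly bounded by S_M, S_A, S_B, S_K respectively. Then for any λ ≥ 0, the function X ↦ λ_max( Ṁ(X) + (A(X)+B(X)K(X))ᵀM(X) + M(X)(A(X)+B(X)K(X)) + 2λM(X) ) is Lipschitz continuous with Lipschitz constant L_Ṁ + 2(S_M L_A + S_A L_M + S_M S_B L_K + S_B S_K L_M + S_M S_K L_B + λ L_M). -/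

import Mathlib

/-! On symmetric matrices `λ_max` is `1`-Lipschitz for the operator 2-norm (Weyl): for a unit
eigenvector `v` of `P`, `λ(P) = ⟪P v, v⟫ = ⟪Q v, v⟫ + ⟪(P - Q) v, v⟫ ≤ λ_max(Q) + ‖P - Q‖`, where
`⟪Q v, v⟫ ≤ λ_max(Q)` because the maximum of the Rayleigh quotient of `Q` is an eigenvalue.
It remains to bound the Lipschitz constant of the contraction matrix, which follows from
`‖a b - a' b'‖ ≤ ‖a‖ ‖b - b'‖ + ‖a - a'‖ ‖b'‖` applied to `(A + BK)ᵀ M` and `M (A + BK)`, with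
`‖A + BK‖ ≤ S_A + S_B S_K` and `A + BK` Lipschitz with constant `L_A + S_B L_K + L_B S_K`. -/

open Matrix

/-- The operator 2-norm of a real matrix, i.e. its norm as a linear operator
between Euclidean spaces (the largest singular value). -/
noncomputable def opNorm2 {k l : ℕ} (A : Matrix (Fin k) (Fin l) ℝ) : ℝ :=
  ‖LinearMap.toContinuousLinearMap (Matrix.toEuclideanLin A)‖

/-- The largest eigenvalue of a real symmetric (Hermitian) matrix. -/
noncomputable def lamMax {n : ℕ} (A : Matrix (Fin n) (Fin n) ℝ) : ℝ :=
  if h : A.IsHermitian then ⨆ i, h.eigenvalues i else 0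

open scoped Matrix.Norms.L2Operator

lemma opNorm2_eq_norm {k l : ℕ} (A : Matrix (Fin k) (Fin l) ℝ) : opNorm2 A = ‖A‖ := rfl

lemma Matrix.l2_opNorm_transpose {m n : Type*} [Fintype m] [Fintype n] [DecidableEq m]
    [DecidableEq n] (A : Matrix m n ℝ) : ‖Aᵀ‖ = ‖A‖ := by
  rw [← conjTranspose_eq_transpose_of_trivial, l2_opNorm_conjTranspose]

section ProductBounds

variable {𝕜 l m n : Type*} [RCLike 𝕜] [Fintype l] [Fintype m] [Fintype n] [DecidableEq m]
  [DecidableEq n]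

lemma Matrix.l2_opNorm_mul_sub_mul_le (a a' : Matrix l m 𝕜) (b b' : Matrix m n 𝕜) :
    ‖a * b - a' * b'‖ ≤ ‖a‖ * ‖b - b'‖ + ‖a - a'‖ * ‖b'‖ := by
  have hsplit : a * b - a' * b' = a * (b - b') + (a - a') * b' := by
    rw [Matrix.mul_sub, Matrix.sub_mul]; abel
  rw [hsplit]
  exact (norm_add_le _ _).trans (add_le_add (l2_opNorm_mul _ _) (l2_opNorm_mul _ _))

lemma Matrix.l2_opNorm_mul_sub_mul_le_of_le {a a' : Matrix l m 𝕜} {b b' : Matrix m n 𝕜}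
    {Sa Sb δa δb : ℝ} (ha : ‖a‖ ≤ Sa) (hb' : ‖b'‖ ≤ Sb) (hδa : ‖a - a'‖ ≤ δa)
    (hδb : ‖b - b'‖ ≤ δb) :
    ‖a * b - a' * b'‖ ≤ Sa * δb + δa * Sb := by
  have hSa_nonneg : 0 ≤ Sa := (norm_nonneg _).trans ha
  have hδa_nonneg : 0 ≤ δa := (norm_nonneg _).trans hδa
  exact (l2_opNorm_mul_sub_mul_le a a' b b').trans (by gcongr)

end ProductBounds

section LamMax

variable {n : ℕ} {P Q : Matrix (Fin n) (Fin n) ℝ}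

lemma le_lamMax_of_mem_spectrum (hQ : Q.IsHermitian) {μ : ℝ} (hμ : μ ∈ spectrum ℝ Q) :
    μ ≤ lamMax Q := by
  obtain ⟨i, rfl⟩ := hQ.spectrum_real_eq_range_eigenvalues ▸ hμ
  rw [lamMax, dif_pos hQ]
  exact le_ciSup (Set.finite_range _).bddAbove i

lemma inner_toEuclideanLin_self_le_lamMax_mul (hQ : Q.IsHermitian)
    (x : EuclideanSpace ℝ (Fin n)) :
    inner ℝ (toEuclideanLin Q x) x ≤ lamMax Q * ‖x‖ ^ 2 := by
  rcases eq_or_ne x 0 with rfl | hx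
  · simp
  have : Nontrivial (EuclideanSpace ℝ (Fin n)) := ⟨⟨x, 0, hx⟩⟩
  have hsup_le := le_lamMax_of_mem_spectrum hQ <| spectrum_toLpLin (A := Q) 2 ▸
    (isSymmetric_toEuclideanLin_iff.mpr hQ).hasEigenvalue_iSup_of_finiteDimensional.mem_spectrum
  have hbdd : BddAbove (Set.range fun y : {y : EuclideanSpace ℝ (Fin n) // y ≠ 0} ↦
      RCLike.re (inner ℝ (toEuclideanLin Q y) (y : EuclideanSpace ℝ (Fin n))) /
        ‖(y : EuclideanSpace ℝ (Fin n))‖ ^ 2) :=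
    ⟨‖Q‖, Set.forall_mem_range.2 fun y ↦
      (le_abs_self _).trans ((toEuclideanCLM (𝕜 := ℝ) Q).rayleighQuotient_le_norm y)⟩
  have hx2 : 0 < ‖x‖ ^ 2 := by positivity
  have hle := le_ciSup hbdd ⟨x, hx⟩
  rw [RCLike.re_to_real, div_le_iff₀ hx2] at hle
  exact hle.trans (mul_le_mul_of_nonneg_right hsup_le hx2.le)

lemma inner_toEuclideanLin_self_le_l2_opNorm_mul (A : Matrix (Fin n) (Fin n) ℝ)
    (x : EuclideanSpace ℝ (Fin n)) :
    inner ℝ (toEuclideanLin A x) x ≤ ‖A‖ * ‖x‖ ^ 2 := by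
  calc _ ≤ ‖toEuclideanLin A x‖ * ‖x‖ := real_inner_le_norm _ _
    _ ≤ ‖A‖ * ‖x‖ * ‖x‖ := by gcongr; exact (toEuclideanCLM (𝕜 := ℝ) A).le_opNorm x
    _ = ‖A‖ * ‖x‖ ^ 2 := by ring

lemma lamMax_le_lamMax_add_l2_opNorm_sub (hP : P.IsHermitian) (hQ : Q.IsHermitian) :
    lamMax P ≤ lamMax Q + ‖P - Q‖ := by
  rcases isEmpty_or_nonempty (Fin n) with hn | hn
  · simp [lamMax]
  rw [lamMax, dif_pos hP]
  refine ciSup_le fun i ↦ ?_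
  set v := hP.eigenvectorBasis i
  have hv : ‖v‖ = 1 := hP.eigenvectorBasis.orthonormal.1 i
  have hPv : toEuclideanLin P v = hP.eigenvalues i • v := by
    rw [toLpLin_apply, hP.mulVec_eigenvectorBasis]; rfl
  calc hP.eigenvalues i = inner ℝ (toEuclideanLin P v) v := by
        rw [hPv, real_inner_smul_left, real_inner_self_eq_norm_sq, hv]; ring
    _ = inner ℝ (toEuclideanLin Q v) v + inner ℝ (toEuclideanLin (P - Q) v) v := by
        rw [map_sub, LinearMap.sub_apply, inner_sub_left]; ring
    _ ≤ lamMax Q * ‖v‖ ^ 2 + ‖P - Q‖ * ‖v‖ ^ 2 :=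
        add_le_add (inner_toEuclideanLin_self_le_lamMax_mul hQ v)
          (inner_toEuclideanLin_self_le_l2_opNorm_mul _ v)
    _ = lamMax Q + ‖P - Q‖ := by rw [hv]; ring

lemma abs_lamMax_sub_lamMax_le (hP : P.IsHermitian) (hQ : Q.IsHermitian) :
    |lamMax P - lamMax Q| ≤ ‖P - Q‖ := by
  have hPQ := lamMax_le_lamMax_add_l2_opNorm_sub hP hQ
  have hQP := lamMax_le_lamMax_add_l2_opNorm_sub hQ hP
  rw [norm_sub_rev] at hQP
  exact abs_sub_le_iff.2 ⟨by linarith, by linarith⟩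

end LamMax

/-- Proposition 2: if `Ṁ, M, A, B, K` are Lipschitz continuous (w.r.t. the Euclidean norm on
`ℝᵈ` and the operator 2-norm on matrices) with constants `L_Ṁ, L_M, L_A, L_B, L_K`, the operator
2-norms of `M, A, B, K` are uniformly bounded by `S_M, S_A, S_B, S_K`, and
`Ṁ(X) + (A(X)+B(X)K(X))ᵀM(X) + M(X)(A(X)+B(X)K(X)) + 2λM(X)` is symmetric for every `X`, then
for `λ ≥ 0` the function `X ↦ λ_max(Ṁ(X) + (A+BK)ᵀM + M(A+BK) + 2λM)` is Lipschitz with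
constant `L_Ṁ + 2(S_M L_A + S_A L_M + S_M S_B L_K + S_B S_K L_M + S_M S_K L_B + λ L_M)`. -/
theorem lamMax_contraction_condition_lipschitz {d n m : ℕ} (lam : ℝ) (hlam : 0 ≤ lam)
    (Mdot M A : EuclideanSpace ℝ (Fin d) → Matrix (Fin n) (Fin n) ℝ)
    (B : EuclideanSpace ℝ (Fin d) → Matrix (Fin n) (Fin m) ℝ)
    (K : EuclideanSpace ℝ (Fin d) → Matrix (Fin m) (Fin n) ℝ)
    (LMdot LM LA LB LK SM SA SB SK : ℝ)
    (hLMdot : ∀ X Y, opNorm2 (Mdot X - Mdot Y) ≤ LMdot * ‖X - Y‖)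
    (hLM : ∀ X Y, opNorm2 (M X - M Y) ≤ LM * ‖X - Y‖)
    (hLA : ∀ X Y, opNorm2 (A X - A Y) ≤ LA * ‖X - Y‖)
    (hLB : ∀ X Y, opNorm2 (B X - B Y) ≤ LB * ‖X - Y‖)
    (hLK : ∀ X Y, opNorm2 (K X - K Y) ≤ LK * ‖X - Y‖)
    (hSM : ∀ X, opNorm2 (M X) ≤ SM)
    (hSA : ∀ X, opNorm2 (A X) ≤ SA)
    (hSB : ∀ X, opNorm2 (B X) ≤ SB)
    (hSK : ∀ X, opNorm2 (K X) ≤ SK)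
    (hsym : ∀ X, (Mdot X + (A X + B X * K X)ᵀ * M X + M X * (A X + B X * K X)
      + (2 * lam) • M X).IsHermitian) :
    ∀ X Y,
      |lamMax (Mdot X + (A X + B X * K X)ᵀ * M X + M X * (A X + B X * K X)
          + (2 * lam) • M X)
        - lamMax (Mdot Y + (A Y + B Y * K Y)ᵀ * M Y + M Y * (A Y + B Y * K Y)
          + (2 * lam) • M Y)|
      ≤ (LMdot + 2 * (SM * LA + SA * LM + SM * SB * LK + SB * SK * LM + SM * SK * LB
          + lam * LM)) * ‖X - Y‖ := by
  intro X Y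
  simp only [opNorm2_eq_norm] at hLMdot hLM hLA hLB hLK hSM hSA hSB hSK
  set G := fun Z ↦ A Z + B Z * K Z with hG
  set r := ‖X - Y‖
  have hGS : ∀ Z, ‖G Z‖ ≤ SA + SB * SK := fun Z ↦
    (norm_add_le _ _).trans (add_le_add (hSA Z)
      ((l2_opNorm_mul _ _).trans (mul_le_mul (hSB Z) (hSK Z) (norm_nonneg _)
        ((norm_nonneg _).trans (hSB Z)))))
  have hGL : ‖G X - G Y‖ ≤ LA * r + (SB * (LK * r) + LB * r * SK) := by
    rw [hG, add_sub_add_comm]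
    exact (norm_add_le _ _).trans (add_le_add (hLA X Y)
      (l2_opNorm_mul_sub_mul_le_of_le (hSB X) (hSK Y) (hLB X Y) (hLK X Y)))
  refine (abs_lamMax_sub_lamMax_le (hsym X) (hsym Y)).trans ?_
  calc _ = ‖(Mdot X - Mdot Y) + ((G X)ᵀ * M X - (G Y)ᵀ * M Y) + (M X * G X - M Y * G Y)
        + (2 * lam) • (M X - M Y)‖ := by rw [smul_sub]; congr 1; abel
    _ ≤ LMdot * r + ((SA + SB * SK) * (LM * r) + (LA * r + (SB * (LK * r) + LB * r * SK)) * SM)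
        + (SM * (LA * r + (SB * (LK * r) + LB * r * SK)) + LM * r * (SA + SB * SK))
        + 2 * lam * (LM * r) := by
      refine norm_add₄_le.trans ?_
      gcongr ?_ + ?_ + ?_ + ?_
      · exact hLMdot X Y
      · refine l2_opNorm_mul_sub_mul_le_of_le ((l2_opNorm_transpose _).trans_le (hGS X)) (hSM Y)
          ?_ (hLM X Y)
        rwa [← transpose_sub, l2_opNorm_transpose]
      · exact l2_opNorm_mul_sub_mul_le_of_le (hSM X) (hGS Y) (hLM X Y) hGL
      · rw [norm_smul, Real.norm_of_nonneg (by positivity)]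
        exact mul_le_mul_of_nonneg_left (hLM X Y) (by positivity)
    _ = _ := by ring
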